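/- arXiv:1709.03700 — 2 statements merged into one kernel-verified Lean document; each statement's English description precedes it below -/
import Mathlib

section
/- For any dcpo P, every C-compact element of the complete lattice C_σ(P) of Scott closed subsets of P is an irreducible Scott closed set (i.e., belongs to Irr_σ(P) or is empty, and if nonempty it is irreducible). -/
/-- A directed complete poset. -/
def Dcpo (P : Type*) [PartialOrder P] : Prop :=
  ∀ D : Set P, D.Nonempty → DirectedOn (· ≤ ·) D → ∃ a, IsLUB D a

/-- A Scott closed set: a lower set closed under suprema of directed subsets. -/
def ScottClosed {P : Type*} [PartialOrder P] (A : Set P) : Prop :=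
  IsLowerSet A ∧ ∀ D ⊆ A, D.Nonempty → DirectedOn (· ≤ ·) D → ∀ a, IsLUB D a → a ∈ A

/-- A nonempty irreducible Scott closed set. -/
def IrrClosed {P : Type*} [PartialOrder P] (A : Set P) : Prop :=
  A.Nonempty ∧ ScottClosed A ∧
    ∀ F₁ F₂ : Set P, ScottClosed F₁ → ScottClosed F₂ → A ⊆ F₁ ∪ F₂ → A ⊆ F₁ ∨ A ⊆ F₂

/-- The lattice `C_σ(P)` of Scott closed subsets, ordered by inclusion. -/
abbrev Cσ (P : Type*) [PartialOrder P] := {A : Set P // ScottClosed A}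

/-- The poset `Irr_σ(P)` of nonempty irreducible Scott closed subsets. -/
abbrev Irrσ (P : Type*) [PartialOrder P] := {A : Set P // IrrClosed A}

/-- An element is down-linear if its principal downset is a chain. -/
def DownLinear {P : Type*} [PartialOrder P] (a : P) : Prop :=
  IsChain (· ≤ ·) (Set.Iic a)

/-- A Scott closed set `A` is a C-compact element of the complete lattice `C_σ(P)`:
for every nonempty Scott closed subset `S` of `C_σ(P)` with supremum `M`, `A ≤ M`
implies `A ∈ S`. -/
def CCompactIn {P : Type*} [PartialOrder P] (A : Cσ P) : Prop :=
  ∀ S : Set (Cσ P), S.Nonempty → ScottClosed S → ∀ M, IsLUB S M → A ≤ M → A ∈ S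

theorem scottClosed_iff_isLowerSet_and_dirSupClosed {P : Type*} [PartialOrder P] {s : Set P} :
    ScottClosed s ↔ IsLowerSet s ∧ DirSupClosed s :=
  Iff.rfl

theorem scottClosed_Iic {P : Type*} [PartialOrder P] (a : P) : ScottClosed (Set.Iic a) :=
  scottClosed_iff_isLowerSet_and_dirSupClosed.2 ⟨isLowerSet_Iic a, dirSupClosed_Iic a⟩

theorem ScottClosed.union {P : Type*} [PartialOrder P] {s t : Set P}
    (hs : ScottClosed s) (ht : ScottClosed t) : ScottClosed (s ∪ t) := by
  rw [scottClosed_iff_isLowerSet_and_dirSupClosed] at hs ht ⊢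
  exact ⟨hs.1.union ht.1, hs.2.union ht.2⟩

theorem isLUB_Iic_union_Iic {Q : Type*} [Preorder Q] {a b c : Q} (h : IsLUB {a, b} c) :
    IsLUB (Set.Iic a ∪ Set.Iic b) c := by
  simpa only [IsLUB, upperBounds_union, upperBounds_Iic, upperBounds_insert,
    upperBounds_singleton] using h

theorem Cσ.isLUB_pair {P : Type*} [PartialOrder P] (F G : Cσ P) :
    IsLUB {F, G} (⟨F ∪ G, F.2.union G.2⟩ : Cσ P) := by
  refine ⟨?_, fun N hN => Set.union_subset (hN (by simp)) (hN (by simp))⟩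
  rintro B (rfl | rfl)
  exacts [Set.subset_union_left, Set.subset_union_right]

/-- Irreducibility is C-compactness tested against the Scott closed set `↓F₁ ∪ ↓F₂` of `C_σ(P)`,
whose supremum is `F₁ ∪ F₂`. -/
theorem stmt12_general {P : Type*} [PartialOrder P]
    (A : Cσ P) (hA : CCompactIn A) :
    (A : Set P) = ∅ ∨ IrrClosed (A : Set P) := by
  rw [or_iff_not_imp_left, ← Ne, ← Set.nonempty_iff_ne_empty]
  refine fun hne => ⟨hne, A.2, fun F₁ F₂ h₁ h₂ hsub => ?_⟩
  let G₁ : Cσ P := ⟨F₁, h₁⟩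
  let G₂ : Cσ P := ⟨F₂, h₂⟩
  exact hA (Set.Iic G₁ ∪ Set.Iic G₂) ⟨G₁, Or.inl (le_refl G₁)⟩
    ((scottClosed_Iic G₁).union (scottClosed_Iic G₂)) _
    (isLUB_Iic_union_Iic (Cσ.isLUB_pair G₁ G₂)) hsub

/-- every C-compact element of `C_σ(P)` is empty or irreducible. -/
theorem stmt12 {P : Type*} [PartialOrder P] (hP : Dcpo P)
    (A : Cσ P) (hA : CCompactIn A) :
    (A : Set P) = ∅ ∨ IrrClosed (A : Set P) :=
  stmt12_general A hA
end

section
/- Kou's dcpo P is bounded-sober: every nonempty irreducible Scott closed subset of P that has an upper bound is the Scott closure of a single point. -/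
/-- Validity predicate for points of Kou's dcpo: `inl x` with `0 < x ≤ 1` (the set `X`),
and `inr (k,a,b)` with `0 < k < 1`, `0 < b ≤ a ≤ 1` (the set `P₀`). -/
def KouValid : ℝ ⊕ (ℝ × ℝ × ℝ) → Prop
  | .inl x => 0 < x ∧ x ≤ 1
  | .inr (k, a, b) => (0 < k ∧ k < 1) ∧ 0 < b ∧ b ≤ a ∧ a ≤ 1

/-- The carrier of Kou's dcpo `P = X ∪ P₀`. -/
def Kou := {p : ℝ ⊕ (ℝ × ℝ × ℝ) // KouValid p}

/-- Kou's order on raw points. -/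
def kle : ℝ ⊕ (ℝ × ℝ × ℝ) → ℝ ⊕ (ℝ × ℝ × ℝ) → Prop
  | .inl x, .inl y => x = y
  | .inl _, .inr _ => False
  | .inr (k₁, a₁, b₁), .inr (k₂, a₂, b₂) => k₁ ≤ k₂ ∧ a₁ = a₂ ∧ b₁ = b₂
  | .inr (k, _a, b), .inl x => _a = x ∨ (k * b ≤ x ∧ x < b)

instance : PartialOrder Kou where
  le p q := kle p.val q.val
  le_refl p := by
    obtain ⟨(x | ⟨k, a, b⟩), hv⟩ := p <;> simp [kle]
  le_trans p q r hpq hqr := by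
    obtain ⟨pv, hp⟩ := p; obtain ⟨qv, hq⟩ := q; obtain ⟨rv, hr⟩ := r
    rcases pv with x | ⟨k₁, a₁, b₁⟩ <;> rcases qv with y | ⟨k₂, a₂, b₂⟩ <;>
      rcases rv with z | ⟨k₃, a₃, b₃⟩ <;>
      simp only [kle, KouValid] at hpq hqr hp hq hr ⊢
    · exact hpq.trans hqr
    · subst hqr; exact hpq
    · obtain ⟨hk, ha, hb⟩ := hpq
      rcases hqr with h | ⟨h1, h2⟩
      · exact Or.inl (ha.trans h)
      · refine Or.inr ⟨le_trans ?_ h1, hb ▸ h2⟩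
        calc k₁ * b₁ = k₁ * b₂ := by rw [hb]
          _ ≤ k₂ * b₂ := by nlinarith [hq.2.1]
    · obtain ⟨hk, ha, hb⟩ := hpq
      obtain ⟨hk', ha', hb'⟩ := hqr
      exact ⟨hk.trans hk', ha.trans ha', hb.trans hb'⟩
  le_antisymm p q hpq hqp := by
    obtain ⟨pv, hp⟩ := p; obtain ⟨qv, hq⟩ := q
    rcases pv with x | ⟨k₁, a₁, b₁⟩ <;> rcases qv with y | ⟨k₂, a₂, b₂⟩ <;>
      simp only [kle, KouValid] at hpq hqp hp hq
    · subst hpq; rfl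
    · obtain ⟨hk, ha, hb⟩ := hpq
      obtain ⟨hk', -, -⟩ := hqp
      subst ha; subst hb
      have hkk : k₁ = k₂ := le_antisymm hk hk'
      subst hkk; rfl
/-!
A bounded irreducible Scott closed set `A` containing a point of `X` is the downset of that
point, since points of `X` are maximal. Otherwise `A ⊆ P₀`: for `(k, a, b) ∈ A` the points of `A`
over `(a, b)` form a chain whose supremum `m` lies in `A`. That supremum is the point `a` of `X`
when the `k`-coordinates approach `1`, which is excluded, so `m = (s, a, b)`. Points of `P₀` with a
common lower bound lie over the same `(a, b)`, so every point of `A` sharing a lower bound with `m`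
is below `m`; hence `A \ ↓m` is Scott closed, and irreducibility gives `A = ↓m`.
-/

section ScottClosed

variable {P : Type*} [PartialOrder P] {A : Set P} {m : P}

theorem scottClosed_Iic_s17 (m : P) : ScottClosed (Set.Iic m) :=
  ⟨isLowerSet_Iic m, fun _ hD _ _ _ ha => ha.2 hD⟩

theorem IsLowerSet.eq_Iic_of_isMax {b : P} (hA : IsLowerSet A) (hmA : m ∈ A) (hm : IsMax m)
    (hb : b ∈ upperBounds A) : A = Set.Iic m :=
  Set.Subset.antisymm (fun _ hx => (hb hx).trans (hm (hb hmA))) fun _ hx => hA hx hmA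

theorem ScottClosed.diff_Iic (hA : ScottClosed A) (h : ∀ q ∈ A, ∀ r ≤ q, r ≤ m → q ≤ m) :
    ScottClosed (A \ Set.Iic m) := by
  refine ⟨fun q r hrq ⟨hqA, hqm⟩ => ⟨hA.1 hrq hqA, fun hrm => hqm (h q hqA r hrq hrm)⟩, ?_⟩
  rintro D hD ⟨d, hd⟩ hdir u hu
  exact ⟨hA.2 D (fun _ hx => (hD hx).1) ⟨d, hd⟩ hdir u hu,
    fun hum => (hD hd).2 ((hu.1 hd).trans hum)⟩

theorem IrrClosed.eq_Iic_of_forall_le (hA : IrrClosed A) (hmA : m ∈ A)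
    (h : ∀ q ∈ A, ∀ r ≤ q, r ≤ m → q ≤ m) : A = Set.Iic m := by
  have hcover : A ⊆ Set.Iic m ∪ A \ Set.Iic m := fun q hq => (em (q ≤ m)).imp id (⟨hq, ·⟩)
  rcases hA.2.2 _ _ (scottClosed_Iic_s17 m) (hA.2.1.diff_Iic h) hcover with hAm | hAm
  · exact hAm.antisymm fun _ hx => hA.2.1.1 hx hmA
  · exact absurd le_rfl (hAm hmA).2

end ScottClosed

namespace Kou

theorem le_def {p q : Kou} : p ≤ q ↔ kle p.val q.val := Iff.rfl

def fiber (a c : ℝ) : Set Kou := {q | ∃ k, q.val = .inr (k, a, c)}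

theorem isMax_of_val_eq_inl {q : Kou} {y : ℝ} (hq : q.val = .inl y) : IsMax q := by
  intro r hqr
  rw [le_def, hq] at hqr
  rcases hr : r.val with z | _ <;> rw [hr] at hqr
  · exact (show r = q from Subtype.ext (by rw [hr, hq, hqr])).le
  · exact hqr.elim

theorem exists_mem_fiber_of_not_isMax {q : Kou} (hq : ¬IsMax q) : ∃ a c, q ∈ fiber a c := by
  rcases hv : q.val with _ | ⟨k, a, c⟩
  · exact absurd (isMax_of_val_eq_inl hv) hq
  · exact ⟨a, c, k, hv⟩

theorem isLowerSet_fiber (a c : ℝ) : IsLowerSet (fiber a c) := by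
  rintro q r hrq ⟨k, hq⟩
  rw [le_def, hq] at hrq
  rcases hr : r.val with _ | ⟨k', a', c'⟩ <;> rw [hr] at hrq
  · exact hrq.elim
  · obtain ⟨-, rfl, rfl⟩ := hrq
    exact ⟨k', hr⟩

theorem eq_of_mem_fiber {q : Kou} {a c a' c' : ℝ} (h : q ∈ fiber a c) (h' : q ∈ fiber a' c') :
    a = a' ∧ c = c' := by
  obtain ⟨k, hk⟩ := h
  obtain ⟨k', hk'⟩ := h'
  simp_all

theorem isChain_fiber (a c : ℝ) : IsChain (· ≤ ·) (fiber a c) := by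
  rintro p ⟨k, hp⟩ q ⟨k', hq⟩ -
  simp only [le_def, hp, hq, kle, and_true]
  exact le_total k k'

theorem valid_of_val_eq_inr {q : Kou} {k a c : ℝ} (hq : q.val = .inr (k, a, c)) :
    (0 < k ∧ k < 1) ∧ 0 < c ∧ c ≤ a ∧ a ≤ 1 := by
  simpa only [hq, KouValid] using q.2

def levels (D : Set Kou) (a c : ℝ) : Set ℝ := {k | ∃ q ∈ D, q.val = .inr (k, a, c)}

section Levels

variable {D : Set Kou} {a c : ℝ} {p : Kou}

theorem upperBounds_cases (hD : D ⊆ fiber a c) (hp : p ∈ D) {u : Kou} (hu : u ∈ upperBounds D) :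
    (∃ k, u.val = .inr (k, a, c) ∧ sSup (levels D a c) ≤ k) ∨ u.val = .inl a ∨
      ∃ y, u.val = .inl y ∧ sSup (levels D a c) * c ≤ y ∧ y < c := by
  obtain ⟨k₀, hp₀⟩ := hD hp
  have hk₀ : k₀ ∈ levels D a c := ⟨p, hp, hp₀⟩
  have hle : ∀ k ∈ levels D a c, kle (.inr (k, a, c)) u.val := by
    rintro k ⟨q, hq, hk⟩
    exact hk ▸ hu hq
  rcases hv : u.val with y | ⟨k, a', c'⟩ <;> simp only [hv, kle] at hle
  · by_cases hy : a = y
    · exact Or.inr (Or.inl (hy ▸ rfl))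
    have hc : 0 < c := (valid_of_val_eq_inr hp₀).2.1
    refine Or.inr (Or.inr ⟨y, rfl, ?_, ((hle k₀ hk₀).resolve_left hy).2⟩)
    exact (le_div_iff₀ hc).mp <| csSup_le ⟨k₀, hk₀⟩ fun k hk =>
      (le_div_iff₀ hc).mpr ((hle k hk).resolve_left hy).1
  · obtain ⟨-, rfl, rfl⟩ := hle k₀ hk₀
    exact Or.inl ⟨k, rfl, csSup_le ⟨k₀, hk₀⟩ fun k hk => (hle k hk).1⟩

theorem one_mem_upperBounds_levels (D : Set Kou) (a c : ℝ) : 1 ∈ upperBounds (levels D a c) := by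
  rintro k ⟨q, -, hq⟩
  exact (valid_of_val_eq_inr hq).1.2.le

theorem exists_le_sSup_levels (hD : D ⊆ fiber a c) {q : Kou} (hq : q ∈ D) :
    ∃ k ≤ sSup (levels D a c), q.val = .inr (k, a, c) := by
  obtain ⟨k, hk⟩ := hD hq
  exact ⟨k, le_csSup ⟨1, one_mem_upperBounds_levels D a c⟩ ⟨q, hq, hk⟩, hk⟩

theorem exists_isLUB_of_sSup_levels_lt (hD : D ⊆ fiber a c) (hp : p ∈ D)
    (hs : sSup (levels D a c) < 1) : ∃ m, IsLUB D m := by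
  obtain ⟨k₀, hk₀s, hp₀⟩ := exists_le_sSup_levels hD hp
  obtain ⟨⟨hk₀, -⟩, hc, hca, ha⟩ := valid_of_val_eq_inr hp₀
  let m : Kou := ⟨.inr (sSup (levels D a c), a, c), by
    unfold KouValid
    exact ⟨⟨hk₀.trans_le hk₀s, hs⟩, hc, hca, ha⟩⟩
  refine ⟨m, fun q hq => ?_, fun u hu => ?_⟩
  · obtain ⟨k, hk, hq⟩ := exists_le_sSup_levels hD hq
    rw [le_def, hq]
    exact ⟨hk, rfl, rfl⟩
  · rcases upperBounds_cases hD hp hu with ⟨k, hv, hk⟩ | hv | ⟨y, hv, hy⟩ <;> rw [le_def, hv]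
    · exact ⟨hk, rfl, rfl⟩
    · exact Or.inl rfl
    · exact Or.inr hy

theorem exists_isLUB_of_sSup_levels_eq_one (hD : D ⊆ fiber a c) (hp : p ∈ D)
    (hs : sSup (levels D a c) = 1) : ∃ m, IsLUB D m := by
  obtain ⟨k₀, -, hp₀⟩ := exists_le_sSup_levels hD hp
  obtain ⟨-, hc, hca, ha⟩ := valid_of_val_eq_inr hp₀
  let m : Kou := ⟨.inl a, by
    unfold KouValid
    exact ⟨hc.trans_le hca, ha⟩⟩
  refine ⟨m, fun q hq => ?_, fun u hu => ?_⟩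
  · obtain ⟨k, -, hq⟩ := exists_le_sSup_levels hD hq
    rw [le_def, hq]
    exact Or.inl rfl
  · rcases upperBounds_cases hD hp hu with ⟨k, hv, hk⟩ | hv | ⟨y, hv, hy⟩
    · linarith [(valid_of_val_eq_inr hv).1.2]
    · rw [le_def, hv]
      rfl
    · rw [hs, one_mul] at hy
      exact absurd hy.1 hy.2.not_ge

theorem exists_isLUB_of_subset_fiber (hD : D ⊆ fiber a c) (hp : p ∈ D) : ∃ m, IsLUB D m := by
  obtain ⟨k₀, -, hp₀⟩ := exists_le_sSup_levels hD hp
  have hk₀ : k₀ ∈ levels D a c := ⟨p, hp, hp₀⟩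
  rcases (csSup_le ⟨k₀, hk₀⟩ (one_mem_upperBounds_levels D a c)).lt_or_eq with hs | hs
  · exact exists_isLUB_of_sSup_levels_lt hD hp hs
  · exact exists_isLUB_of_sSup_levels_eq_one hD hp hs

end Levels

end Kou

open Kou in
/-- Kou's dcpo is bounded-sober: every nonempty irreducible Scott closed
subset with an upper bound is the Scott closure (= principal downset) of a point. -/
theorem stmt17 (A : Set Kou) (hA : IrrClosed A) (hbd : ∃ b : Kou, ∀ x ∈ A, x ≤ b) :
    ∃ x : Kou, A = Set.Iic x := by
  obtain ⟨b, hb⟩ := hbd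
  by_cases hmax : ∃ q ∈ A, IsMax q
  · obtain ⟨q, hqA, hq⟩ := hmax
    exact ⟨q, hA.2.1.1.eq_Iic_of_isMax hqA hq hb⟩
  push Not at hmax
  obtain ⟨p, hpA⟩ := hA.1
  obtain ⟨a, c, hp⟩ := exists_mem_fiber_of_not_isMax (hmax p hpA)
  obtain ⟨m, hm⟩ := exists_isLUB_of_subset_fiber Set.inter_subset_right (Set.mem_inter hpA hp)
  have hmA : m ∈ A := hA.2.1.2 (A ∩ fiber a c) Set.inter_subset_left ⟨p, hpA, hp⟩
    ((isChain_fiber a c).mono Set.inter_subset_right).directedOn m hm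
  obtain ⟨a', c', hm'⟩ := exists_mem_fiber_of_not_isMax (hmax m hmA)
  obtain ⟨rfl, rfl⟩ := eq_of_mem_fiber (isLowerSet_fiber a' c' (hm.1 ⟨hpA, hp⟩) hm') hp
  refine ⟨m, hA.eq_Iic_of_forall_le hmA fun q hqA r hrq hrm => hm.1 ⟨hqA, ?_⟩⟩
  obtain ⟨a', c', hq⟩ := exists_mem_fiber_of_not_isMax (hmax q hqA)
  obtain ⟨rfl, rfl⟩ := eq_of_mem_fiber (isLowerSet_fiber _ _ hrm hm') (isLowerSet_fiber _ _ hrq hq)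
  exact hq
end
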